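/- arXiv:1812.02613 — 6 statements merged into one kernel-verified Lean document; each statement's English description precedes it below -/
import Mathlib

section
/- Let G be a graph with n vertices, m edges, signless Laplacian Q = D + A, and least signless Laplacian eigenvalue δₙ. Then 1 + 2m/(2m − n·δₙ) ≤ χ_v(G), where χ_v(G) is the vector chromatic number of G. -/
open Matrix Finset
open scoped Kronecker Classical

/-- Largest eigenvalue (spectral supremum) of a real matrix. -/
noncomputable def lamMax {n : ℕ} (M : Matrix (Fin n) (Fin n) ℝ) : ℝ := sSup (spectrum ℝ M)

/-- Smallest eigenvalue (spectral infimum) of a real matrix. -/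
noncomputable def lamMin {n : ℕ} (M : Matrix (Fin n) (Fin n) ℝ) : ℝ := sInf (spectrum ℝ M)

/-- Diagonal matrix of vertex degrees. -/
noncomputable def degMatrix {n : ℕ} (G : SimpleGraph (Fin n)) : Matrix (Fin n) (Fin n) ℝ :=
  Matrix.diagonal fun i => (G.degree i : ℝ)

/-- The vector chromatic number: the smallest real `k ≥ 2` such that there exist unit
vectors `u i` with `⟪u i, u j⟫ ≤ -1/(k-1)` for all edges `ij`. -/
noncomputable def vecChromNum {V : Type*} [Fintype V] (G : SimpleGraph V) : ℝ :=
  sInf {k : ℝ | 2 ≤ k ∧ ∃ u : V → EuclideanSpace ℝ V,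
    (∀ i, ‖u i‖ = 1) ∧ ∀ i j, G.Adj i j → (inner ℝ (u i) (u j) : ℝ) ≤ -(1/(k-1))}

/-!
Write `Q = D + A` and `δ = lamMin Q`. Since `xᵀ Q x = ∑_{ij ∈ E} (x_i + x_j)²` and
`Q - δ I` is positive semidefinite, applying `xᵀ Q x ≥ δ ‖x‖²` to each coordinate of a vector
`k`-coloring `u` and summing gives `n δ ≤ ∑_{ij ∈ E} ‖u_i + u_j‖² ≤ m (2 - 2/(k - 1))`,
which rearranges to `1 + 2m/(2m - n δ) ≤ k`. The regular simplex provides a vector coloring,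
so this lower bound passes to the infimum.
-/

open scoped RealInnerProductSpace

open scoped MatrixOrder in
theorem posSemidef_sub_lamMin_smul_one {n : ℕ} {M : Matrix (Fin n) (Fin n) ℝ}
    (hM : M.IsHermitian) : (M - lamMin M • 1).PosSemidef := by
  have h : algebraMap ℝ _ (lamMin M) ≤ M :=
    (algebraMap_le_iff_le_spectrum hM.isSelfAdjoint).2 fun _ hx =>
      csInf_le Matrix.finite_real_spectrum.bddBelow hx
  simpa [Matrix.le_iff, Algebra.algebraMap_eq_smul_one] using h

theorem lamMin_mul_dotProduct_self_le {n : ℕ} {M : Matrix (Fin n) (Fin n) ℝ}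
    (hM : M.IsHermitian) (x : Fin n → ℝ) : lamMin M * (x ⬝ᵥ x) ≤ x ⬝ᵥ (M *ᵥ x) := by
  simpa [sub_mulVec, smul_mulVec, dotProduct_sub, dotProduct_smul] using
    (posSemidef_sub_lamMin_smul_one hM).dotProduct_mulVec_nonneg x

namespace SimpleGraph

variable {V : Type*} [Fintype V] [DecidableEq V] (G : SimpleGraph V) [DecidableRel G.Adj]

theorem isHermitian_signlessLaplacian : (G.degMatrix ℝ + G.adjMatrix ℝ).IsHermitian :=
  (isHermitian_diagonal _).add (isSymm_adjMatrix G)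

theorem dotProduct_signlessLaplacian_mulVec (x : V → ℝ) :
    x ⬝ᵥ ((G.degMatrix ℝ + G.adjMatrix ℝ) *ᵥ x) =
      (∑ i, ∑ j, if G.Adj i j then (x i + x j) ^ 2 else 0) / 2 := by
  have hlhs : x ⬝ᵥ ((G.degMatrix ℝ + G.adjMatrix ℝ) *ᵥ x) =
      ∑ i, ∑ j, if G.Adj i j then x i ^ 2 + x i * x j else 0 := by
    rw [add_mulVec, dotProduct_add, dotProduct_mulVec_degMatrix, dotProduct_mulVec_adjMatrix,
      ← Finset.sum_add_distrib]
    refine Finset.sum_congr rfl fun i _ => ?_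
    rw [degree_eq_sum_if_adj, Finset.sum_mul, Finset.sum_mul, ← Finset.sum_add_distrib]
    refine Finset.sum_congr rfl fun j _ => ?_
    split_ifs <;> ring
  have hswap : (∑ i, ∑ j, if G.Adj i j then x j ^ 2 + x i * x j else 0) =
      ∑ i, ∑ j, if G.Adj i j then x i ^ 2 + x i * x j else 0 := by
    rw [Finset.sum_comm]
    refine Finset.sum_congr rfl fun i _ => Finset.sum_congr rfl fun j _ => ?_
    simp only [G.adj_comm, mul_comm]
  rw [hlhs, eq_div_iff two_ne_zero, mul_two]
  nth_rewrite 2 [← hswap]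
  rw [← Finset.sum_add_distrib]
  refine Finset.sum_congr rfl fun i _ => ?_
  rw [← Finset.sum_add_distrib]
  refine Finset.sum_congr rfl fun j _ => ?_
  split_ifs <;> ring

end SimpleGraph

theorem degMatrix_eq {n : ℕ} (G : SimpleGraph (Fin n)) : degMatrix G = G.degMatrix ℝ := rfl

theorem lamMin_signlessLaplacian_mul_sum_norm_sq_le {n : ℕ} {ι : Type*} [Fintype ι]
    (G : SimpleGraph (Fin n)) (u : Fin n → EuclideanSpace ℝ ι) :
    lamMin (degMatrix G + G.adjMatrix ℝ) * ∑ i, ‖u i‖ ^ 2 ≤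
      (∑ i, ∑ j, if G.Adj i j then ‖u i + u j‖ ^ 2 else 0) / 2 := by
  rw [degMatrix_eq]
  have hcoord : ∀ c, lamMin (G.degMatrix ℝ + G.adjMatrix ℝ) * ∑ i, u i c ^ 2 ≤
      (∑ i, ∑ j, if G.Adj i j then (u i c + u j c) ^ 2 else 0) / 2 := fun c => by
    have h := lamMin_mul_dotProduct_self_le G.isHermitian_signlessLaplacian fun i => u i c
    rw [G.dotProduct_signlessLaplacian_mulVec] at h
    simpa only [dotProduct, ← sq] using h
  calc lamMin (G.degMatrix ℝ + G.adjMatrix ℝ) * ∑ i, ‖u i‖ ^ 2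
      = ∑ c, lamMin (G.degMatrix ℝ + G.adjMatrix ℝ) * ∑ i, u i c ^ 2 := by
        simp_rw [EuclideanSpace.real_norm_sq_eq, ← Finset.mul_sum]
        rw [Finset.sum_comm]
    _ ≤ ∑ c, (∑ i, ∑ j, if G.Adj i j then (u i c + u j c) ^ 2 else 0) / 2 :=
        Finset.sum_le_sum fun c _ => hcoord c
    _ = (∑ i, ∑ j, if G.Adj i j then ‖u i + u j‖ ^ 2 else 0) / 2 := by
        simp_rw [EuclideanSpace.real_norm_sq_eq, ← Finset.sum_div, PiLp.add_apply]
        rw [Finset.sum_comm]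
        simp_rw [Finset.sum_comm (γ := ι), Finset.sum_ite_irrel, Finset.sum_const_zero]

def IsVectorColoring {V ι : Type*} [Fintype ι] (G : SimpleGraph V) (k : ℝ)
    (u : V → EuclideanSpace ℝ ι) : Prop :=
  (∀ i, ‖u i‖ = 1) ∧ ∀ i j, G.Adj i j → ⟪u i, u j⟫ ≤ -(1 / (k - 1))

theorem IsVectorColoring.norm_add_sq_le {V ι : Type*} [Fintype ι] {G : SimpleGraph V} {k : ℝ}
    {u : V → EuclideanSpace ℝ ι} (hu : IsVectorColoring G k u) {i j : V} (hij : G.Adj i j) :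
    ‖u i + u j‖ ^ 2 ≤ 2 * (1 - 1 / (k - 1)) := by
  rw [norm_add_sq_real, hu.1 i, hu.1 j]
  linarith [hu.2 i j hij]

theorem exists_regular_simplex {ι : Type*} [Fintype ι] [DecidableEq ι]
    (hι : 2 ≤ Fintype.card ι) :
    ∃ v : ι → EuclideanSpace ℝ ι, (∀ i, ‖v i‖ = 1) ∧
      ∀ i j, i ≠ j → ⟪v i, v j⟫ = -(1 / ((Fintype.card ι : ℝ) - 1)) := by
  set N : ℝ := (Fintype.card ι : ℝ)
  have hN : 2 ≤ N := Nat.ofNat_le_cast.2 hι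
  have hN1 : N - 1 ≠ 0 := by linarith
  set ones : EuclideanSpace ℝ ι := WithLp.toLp 2 fun _ => 1
  have hones : ⟪ones, ones⟫ = N := by simp [ones, N, EuclideanSpace.real_norm_sq_eq]
  set w : ι → EuclideanSpace ℝ ι := fun i => EuclideanSpace.single i 1 - (1 / N) • ones
  have hw : ∀ i j, ⟪w i, w j⟫ = (if i = j then 1 else 0) - 1 / N := by
    intro i j
    simp only [w, inner_sub_left, inner_sub_right, real_inner_smul_left, real_inner_smul_right,
      EuclideanSpace.inner_single_left, EuclideanSpace.inner_single_right, hones]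
    simp [ones, eq_comm]
    field_simp
    ring
  set r := √(N / (N - 1))
  have hr : r * r = N / (N - 1) := Real.mul_self_sqrt (by bound)
  have hv : ∀ i j, ⟪r • w i, r • w j⟫ = N / (N - 1) * ((if i = j then 1 else 0) - 1 / N) := by
    intro i j
    rw [real_inner_smul_left, real_inner_smul_right, hw, ← mul_assoc, hr]
  refine ⟨fun i => r • w i, fun i => ?_, fun i j hij => ?_⟩
  · have h : N / (N - 1) * (1 - 1 / N) = 1 := by field_simp
    rw [norm_eq_sqrt_real_inner, hv, if_pos rfl, h, Real.sqrt_one]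
  · rw [hv, if_neg hij]
    field_simp
    ring

theorem exists_isVectorColoring {V : Type*} [Fintype V] (G : SimpleGraph V) :
    ∃ k, 2 ≤ k ∧ ∃ u : V → EuclideanSpace ℝ V, IsVectorColoring G k u := by
  classical
  rcases le_or_gt 2 (Fintype.card V) with hV | hV
  · obtain ⟨v, hv_norm, hv_inner⟩ := exists_regular_simplex hV
    exact ⟨Fintype.card V, by exact_mod_cast hV, v, hv_norm,
      fun i j hij => (hv_inner i j hij.ne).le⟩
  · have : Subsingleton V := Fintype.card_le_one_iff_subsingleton.1 (by omega)
    exact ⟨2, le_rfl, fun i => EuclideanSpace.single i 1, fun i => by simp,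
      fun i j hij => absurd (Subsingleton.elim i j) hij.ne⟩

theorem one_add_div_sub_le {m d k : ℝ} (hk : 2 ≤ k) (hm : 0 ≤ m) (h : d ≤ m - m / (k - 1)) :
    1 + m / (m - d) ≤ k := by
  rcases hm.eq_or_lt with rfl | hm
  · simp only [zero_div, add_zero]
    linarith
  have hk1 : 0 < k - 1 := by linarith
  have hmd : m / (k - 1) ≤ m - d := by linarith
  have hpos : 0 < m - d := (div_pos hm hk1).trans_le hmd
  have hmd' : m ≤ (m - d) * (k - 1) := (div_le_iff₀ hk1).1 hmd
  rw [← le_sub_iff_add_le', div_le_iff₀ hpos]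
  linarith

theorem le_of_isVectorColoring {n : ℕ} {ι : Type*} [Fintype ι] (G : SimpleGraph (Fin n))
    {k : ℝ} (hk : 2 ≤ k) {u : Fin n → EuclideanSpace ℝ ι} (hu : IsVectorColoring G k u) :
    1 + 2 * (#G.edgeFinset : ℝ) /
        (2 * (#G.edgeFinset : ℝ) - n * lamMin (degMatrix G + G.adjMatrix ℝ)) ≤ k := by
  refine one_add_div_sub_le hk (by positivity) ?_
  calc (n : ℝ) * lamMin (degMatrix G + G.adjMatrix ℝ)
      = lamMin (degMatrix G + G.adjMatrix ℝ) * ∑ i, ‖u i‖ ^ 2 := by simp [hu.1, mul_comm]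
    _ ≤ (∑ i, ∑ j, if G.Adj i j then ‖u i + u j‖ ^ 2 else 0) / 2 :=
        lamMin_signlessLaplacian_mul_sum_norm_sq_le G u
    _ ≤ (∑ i, ∑ j, if G.Adj i j then 2 * (1 - 1 / (k - 1)) else 0) / 2 := by
        gcongr with i _ j _
        split_ifs with hij
        exacts [hu.norm_add_sq_le hij, le_rfl]
    _ = 2 * (#G.edgeFinset : ℝ) - 2 * #G.edgeFinset / (k - 1) := by
        simp_rw [← mul_boole _ (2 * (1 - 1 / (k - 1))), ← Finset.mul_sum,
          ← G.degree_eq_sum_if_adj, ← Nat.cast_sum, G.sum_degrees_eq_twice_card_edges]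
        push_cast
        ring

/-- Lima et al. bound for the vector chromatic number:
`1 + 2m/(2m - n * deltaN) <= chi_v(G)`, where `deltaN` is the least eigenvalue of the
signless Laplacian `Q = D + A`. -/
theorem lima_bound_vector_chromatic_number {n : ℕ} (G : SimpleGraph (Fin n)) :
    1 + (2 * (G.edgeFinset.card : ℝ)) /
        (2 * (G.edgeFinset.card : ℝ) - (n : ℝ) * lamMin (degMatrix G + G.adjMatrix ℝ)) ≤
      vecChromNum G := by
  obtain ⟨k₀, hk₀⟩ := exists_isVectorColoring G
  refine le_csInf ⟨k₀, hk₀⟩ ?_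
  rintro k ⟨hk, u, hu⟩
  exact le_of_isVectorColoring G hk hu
end

section
/- Let G be a connected graph with adjacency matrix eigenvalues μ₁ ≥ ... ≥ μₙ, largest Laplacian eigenvalue λ₁, and largest signless Laplacian eigenvalue δ₁. Then 1 + μ₁/(μ₁ − δ₁ + λ₁) ≤ χ_v(G). -/
open Matrix Finset
open scoped Kronecker Classical

/-!
Let `z` be the entrywise absolute value of a unit top eigenvector of the signless Laplacian
`Q = D + A`; since `Q` has nonnegative entries, `δ₁ ≤ zᵀQz = p + q` with `p = zᵀDz` and
`q = zᵀAz ≤ μ₁`. For a vector colouring `u` with parameter `k`, the Schur product of the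
positive semidefinite matrices `λ₁I - L` and `Gram(u)` is positive semidefinite, and evaluating
it at `z ≥ 0` gives `p + q/(k-1) ≤ λ₁`. Hence `δ₁ ≤ λ₁ + (1 - 1/(k-1)) μ₁`, that is
`μ₁/(k-1) ≤ μ₁ - δ₁ + λ₁`, which rearranges to the bound.
-/

open scoped MatrixOrder

namespace Matrix

section QuadraticForm

variable {ι : Type*} [Fintype ι]

theorem dotProduct_mulVec_self_mono {M N : Matrix ι ι ℝ} (hMN : ∀ i j, M i j ≤ N i j)
    {z : ι → ℝ} (hz : 0 ≤ z) : z ⬝ᵥ M *ᵥ z ≤ z ⬝ᵥ N *ᵥ z := by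
  simp only [dot_mulVec_eq_sum_sum]
  gcongr with j _ i _
  · exact hz j
  · exact hz i
  · exact hMN i j

theorem dotProduct_mulVec_self_le_abs {M : Matrix ι ι ℝ} (hM : ∀ i j, 0 ≤ M i j) (v : ι → ℝ) :
    v ⬝ᵥ M *ᵥ v ≤ |v| ⬝ᵥ M *ᵥ |v| := by
  simp only [dot_mulVec_eq_sum_sum, Pi.abs_apply]
  refine Finset.sum_le_sum fun j _ => Finset.sum_le_sum fun i _ => ?_
  calc v i * M i j * v j ≤ |v i * M i j * v j| := le_abs_self _
    _ = |v i| * M i j * |v j| := by rw [abs_mul, abs_mul, abs_of_nonneg (hM i j)]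

end QuadraticForm

section LamMax

variable {n : ℕ} {S : Matrix (Fin n) (Fin n) ℝ}

theorem IsHermitian.posSemidef_lamMax_smul_one_sub (hS : S.IsHermitian) :
    (lamMax S • 1 - S).PosSemidef := by
  have hfin : (spectrum ℝ S).Finite :=
    hS.spectrum_real_eq_range_eigenvalues ▸ Set.finite_range _
  have hle : S ≤ algebraMap ℝ _ (lamMax S) :=
    le_algebraMap_of_spectrum_le fun x hx => le_csSup hfin.bddAbove hx
  rwa [Algebra.algebraMap_eq_smul_one, le_iff] at hle

theorem IsHermitian.dotProduct_mulVec_self_le_lamMax (hS : S.IsHermitian) (x : Fin n → ℝ) :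
    x ⬝ᵥ S *ᵥ x ≤ lamMax S * (x ⬝ᵥ x) := by
  have h := hS.posSemidef_lamMax_smul_one_sub.dotProduct_mulVec_nonneg x
  rw [star_trivial, sub_mulVec, dotProduct_sub, smul_mulVec, one_mulVec, dotProduct_smul,
    smul_eq_mul] at h
  linarith

theorem IsHermitian.diag_le_lamMax (hS : S.IsHermitian) (i : Fin n) : S i i ≤ lamMax S := by
  simpa [dot_mulVec_eq_sum_sum, Pi.single_apply] using
    hS.dotProduct_mulVec_self_le_lamMax (Pi.single i 1)

theorem IsHermitian.exists_unit_mulVec_eq_lamMax_smul [Nonempty (Fin n)] (hS : S.IsHermitian) :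
    ∃ v : Fin n → ℝ, v ⬝ᵥ v = 1 ∧ S *ᵥ v = lamMax S • v := by
  obtain ⟨i, hi⟩ : ∃ i, hS.eigenvalues i = lamMax S := by
    obtain ⟨i, -, hi⟩ := Finset.univ.exists_max_image hS.eigenvalues Finset.univ_nonempty
    refine ⟨i, (IsGreatest.csSup_eq ?_).symm⟩
    rw [hS.spectrum_real_eq_range_eigenvalues]
    exact ⟨⟨i, rfl⟩, Set.forall_mem_range.2 fun j => hi j (Finset.mem_univ j)⟩
  refine ⟨hS.eigenvectorBasis i, ?_, by rw [hS.mulVec_eigenvectorBasis, hi]⟩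
  have h := inner_self_eq_one_of_norm_eq_one (𝕜 := ℝ) (hS.eigenvectorBasis.orthonormal.1 i)
  rwa [EuclideanSpace.inner_eq_star_dotProduct, star_trivial] at h

theorem IsHermitian.exists_nonneg_unit_lamMax_le [Nonempty (Fin n)] (hS : S.IsHermitian)
    (hS₀ : ∀ i j, 0 ≤ S i j) : ∃ z : Fin n → ℝ, 0 ≤ z ∧ z ⬝ᵥ z = 1 ∧ lamMax S ≤ z ⬝ᵥ S *ᵥ z := by
  obtain ⟨v, hv, hSv⟩ := hS.exists_unit_mulVec_eq_lamMax_smul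
  refine ⟨|v|, abs_nonneg v, ?_, ?_⟩
  · simpa [dotProduct, ← abs_mul] using hv
  · calc lamMax S = v ⬝ᵥ S *ᵥ v := by rw [hSv, dotProduct_smul, hv, smul_eq_mul, mul_one]
      _ ≤ |v| ⬝ᵥ S *ᵥ |v| := dotProduct_mulVec_self_le_abs hS₀ v

end LamMax

end Matrix

namespace SimpleGraph

variable {V E : Type*} [NormedAddCommGroup E] [InnerProductSpace ℝ E]

def IsVectorColoring (G : SimpleGraph V) (k : ℝ) (u : V → E) : Prop :=
  (∀ i, ‖u i‖ = 1) ∧ ∀ i j, G.Adj i j → inner ℝ (u i) (u j) ≤ -(1 / (k - 1))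

namespace IsVectorColoring

theorem diag_gram {G : SimpleGraph V} {k : ℝ} {u : V → E} (hu : G.IsVectorColoring k u) :
    (gram ℝ u).diag = 1 := by
  ext i
  simp [gram, hu.1 i]

theorem adjMatrix_hadamard_gram_le {G : SimpleGraph V} [DecidableRel G.Adj] {k : ℝ} {u : V → E}
    (hu : G.IsVectorColoring k u) (i j : V) :
    (G.adjMatrix ℝ ⊙ gram ℝ u) i j ≤ (-(1 / (k - 1)) • G.adjMatrix ℝ) i j := by
  by_cases h : G.Adj i j
  · simpa [h, gram] using hu.2 i j h
  · simp [h]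

theorem le_lamMax_lapMatrix {n : ℕ} {G : SimpleGraph (Fin n)} {k : ℝ} {u : Fin n → E}
    (hu : G.IsVectorColoring k u) {z : Fin n → ℝ} (hz : 0 ≤ z) (hz₁ : z ⬝ᵥ z = 1) :
    z ⬝ᵥ G.degMatrix ℝ *ᵥ z + 1 / (k - 1) * (z ⬝ᵥ G.adjMatrix ℝ *ᵥ z) ≤
      lamMax (G.lapMatrix ℝ) := by
  set l := lamMax (G.lapMatrix ℝ)
  have hM := (G.isHermitian_lapMatrix ℝ).posSemidef_lamMax_smul_one_sub
  have hMW : (l • 1 - G.lapMatrix ℝ) ⊙ gram ℝ u =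
      l • 1 - G.degMatrix ℝ + G.adjMatrix ℝ ⊙ gram ℝ u := by
    have hdiag : l • 1 - G.degMatrix ℝ = diagonal fun i => l - G.degree i := by
      rw [smul_one_eq_diagonal, degMatrix, diagonal_sub]
    rw [show l • 1 - G.lapMatrix ℝ = l • 1 - G.degMatrix ℝ + G.adjMatrix ℝ by
      rw [lapMatrix]; abel, add_hadamard, hdiag, diagonal_hadamard, hu.diag_gram, mul_one]
  have h₀ := (hM.hadamard (posSemidef_gram ℝ u)).dotProduct_mulVec_nonneg z
  rw [star_trivial, hMW, add_mulVec, dotProduct_add, sub_mulVec, dotProduct_sub, smul_mulVec,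
    one_mulVec, dotProduct_smul, hz₁, smul_eq_mul, mul_one] at h₀
  have h₁ := dotProduct_mulVec_self_mono hu.adjMatrix_hadamard_gram_le hz
  rw [smul_mulVec, dotProduct_smul, smul_eq_mul] at h₁
  linarith

end IsVectorColoring

end SimpleGraph

section RegularSimplex

variable (V : Type*) [Fintype V] [DecidableEq V]

noncomputable def regularSimplex : V → EuclideanSpace ℝ V := fun i =>
  √(Fintype.card V / (Fintype.card V - 1)) •
    (EuclideanSpace.single i 1 - WithLp.toLp 2 fun _ => 1 / (Fintype.card V : ℝ))

variable {V}

theorem inner_regularSimplex (hV : 2 ≤ Fintype.card V) (i j : V) :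
    inner ℝ (regularSimplex V i) (regularSimplex V j) =
      if i = j then 1 else -(1 / (Fintype.card V - 1 : ℝ)) := by
  have hw : inner ℝ (WithLp.toLp 2 fun _ : V => 1 / (Fintype.card V : ℝ))
      (WithLp.toLp 2 fun _ : V => 1 / (Fintype.card V : ℝ)) = 1 / Fintype.card V := by
    rw [EuclideanSpace.inner_toLp_toLp]
    simp only [dotProduct, star_trivial, sum_const, card_univ, nsmul_eq_mul]
    field_simp
  rw [regularSimplex, regularSimplex, real_inner_smul_left, real_inner_smul_right, ← mul_assoc]
  simp only [inner_sub_left, inner_sub_right, hw, EuclideanSpace.inner_single_left,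
    EuclideanSpace.inner_single_right]
  have hN : (2 : ℝ) ≤ Fintype.card V := by exact_mod_cast hV
  generalize (Fintype.card V : ℝ) = N at *
  have hN₁ : N - 1 ≠ 0 := by linarith
  rw [Real.mul_self_sqrt (div_nonneg (by linarith) (by linarith))]
  simp only [PiLp.single_apply, map_one, one_mul, conj_trivial, sub_self, sub_zero, @eq_comm _ j i]
  split_ifs <;> field_simp
  ring

end RegularSimplex

namespace SimpleGraph

variable {V : Type*} [Fintype V]

theorem isVectorColoring_regularSimplex [DecidableEq V] (G : SimpleGraph V)
    (hV : 2 ≤ Fintype.card V) : G.IsVectorColoring (Fintype.card V) (regularSimplex V) := by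
  refine ⟨fun i => ?_, fun i j hij => ?_⟩
  · have h := inner_regularSimplex hV i i
    rw [if_pos rfl, real_inner_self_eq_norm_sq] at h
    exact (pow_eq_one_iff_of_nonneg (norm_nonneg _) two_ne_zero).1 h
  · rw [inner_regularSimplex hV, if_neg (G.ne_of_adj hij)]

theorem exists_isVectorColoring (G : SimpleGraph V) :
    ∃ k, 2 ≤ k ∧ ∃ u : V → EuclideanSpace ℝ V, G.IsVectorColoring k u := by
  classical
  rcases le_or_gt 2 (Fintype.card V) with hV | hV
  · exact ⟨_, by exact_mod_cast hV, _, G.isVectorColoring_regularSimplex hV⟩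
  · refine ⟨2, le_rfl, fun i => EuclideanSpace.single i 1, fun i => by simp, fun i j hij => ?_⟩
    exact absurd (Fintype.card_le_one_iff.1 (by omega) i j) (G.ne_of_adj hij)

theorem le_vecChromNum {G : SimpleGraph V} {x : ℝ}
    (h : ∀ k, 2 ≤ k → ∀ u : V → EuclideanSpace ℝ V, G.IsVectorColoring k u → x ≤ k) :
    x ≤ vecChromNum G :=
  le_csInf G.exists_isVectorColoring fun k ⟨hk, u, hu⟩ => h k hk u hu

theorem two_le_vecChromNum (G : SimpleGraph V) : 2 ≤ vecChromNum G :=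
  le_vecChromNum fun _ hk _ _ => hk

end SimpleGraph

theorem one_add_div_le_of_div_sub_one_le {μ d k : ℝ} (hk : 2 ≤ k) (hμ : 0 ≤ μ)
    (h : μ / (k - 1) ≤ d) : 1 + μ / d ≤ k := by
  rcases le_or_gt d 0 with hd | hd
  · linarith [div_nonpos_of_nonneg_of_nonpos hμ hd]
  · have : μ / d ≤ k - 1 := by
      rw [div_le_iff₀ hd, mul_comm]
      rwa [div_le_iff₀ (by linarith)] at h
    linarith

theorem kolotilina_bound_vector_chromatic_number_general {n : ℕ} (G : SimpleGraph (Fin n)) :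
    1 + lamMax (G.adjMatrix ℝ) /
        (lamMax (G.adjMatrix ℝ) - lamMax (degMatrix G + G.adjMatrix ℝ) +
          lamMax (degMatrix G - G.adjMatrix ℝ)) ≤
      vecChromNum G := by
  rcases isEmpty_or_nonempty (Fin n) with hn | hn
  · rw [Subsingleton.elim (degMatrix G + _) (G.adjMatrix ℝ),
      Subsingleton.elim (degMatrix G - _) (G.adjMatrix ℝ), sub_self, zero_add]
    linarith [div_self_le_one (lamMax (G.adjMatrix ℝ)), G.two_le_vecChromNum]
  -- `degMatrix G` is definitionally Mathlib's `G.degMatrix ℝ`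
  change 1 + lamMax (G.adjMatrix ℝ) / (lamMax (G.adjMatrix ℝ) -
    lamMax (G.degMatrix ℝ + G.adjMatrix ℝ) + lamMax (G.lapMatrix ℝ)) ≤ vecChromNum G
  have hA := G.isHermitian_adjMatrix ℝ
  have hQ₀ : ∀ i j, 0 ≤ (G.degMatrix ℝ + G.adjMatrix ℝ) i j := fun i j => by
    simp only [Matrix.add_apply, SimpleGraph.degMatrix, diagonal_apply, SimpleGraph.adjMatrix_apply]
    split_ifs <;> positivity
  obtain ⟨z, hz, hz₁, hδ⟩ :=
    ((G.isHermitian_degMatrix ℝ).add hA).exists_nonneg_unit_lamMax_le hQ₀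
  rw [add_mulVec, dotProduct_add] at hδ
  have hq : z ⬝ᵥ G.adjMatrix ℝ *ᵥ z ≤ lamMax (G.adjMatrix ℝ) := by
    simpa [hz₁] using hA.dotProduct_mulVec_self_le_lamMax z
  have hμ : 0 ≤ lamMax (G.adjMatrix ℝ) := by simpa using hA.diag_le_lamMax hn.some
  refine SimpleGraph.le_vecChromNum fun k hk u hu => one_add_div_le_of_div_sub_one_le hk hμ ?_
  have hp := hu.le_lamMax_lapMatrix hz hz₁
  have ht : 1 / (k - 1) ≤ 1 := by rw [div_le_one (by linarith)]; linarith
  have hslack := mul_nonneg (sub_nonneg.2 ht) (sub_nonneg.2 hq)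
  rw [div_eq_mul_one_div, mul_comm]
  linarith

/-- Kolotilina bound for the vector chromatic number of a connected graph:
`1 + mu1/(mu1 - delta1 + lambda1) <= chi_v(G)`. -/
theorem kolotilina_bound_vector_chromatic_number {n : ℕ} (G : SimpleGraph (Fin n))
    (hconn : G.Connected) :
    1 + lamMax (G.adjMatrix ℝ) /
        (lamMax (G.adjMatrix ℝ) - lamMax (degMatrix G + G.adjMatrix ℝ) +
          lamMax (degMatrix G - G.adjMatrix ℝ)) ≤
      vecChromNum G :=
  kolotilina_bound_vector_chromatic_number_general G
end

section
/- Let Φ ∈ ℂ^{n×n} be a correlation matrix (Hermitian positive semidefinite with all diagonal entries equal to 1) and X ∈ ℂ^{n×n} be Hermitian. Then X majorizes the Schur (entrywise) product Φ ∘ X; i.e., writing the eigenvalues of X as α₁ ≥ ... ≥ αₙ and of Φ ∘ X as β₁ ≥ ... ≥ βₙ, we have Σ_{i≤ℓ} α_i ≥ Σ_{i≤ℓ} β_i for all ℓ < n, and Σ_i α_i = Σ_i β_i. -/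
open Matrix Finset
open scoped Kronecker Classical ComplexOrder

/-!
Write `Φ = Bᴴ B` and let `Dₖ` be the diagonal matrix carrying the `k`-th row of `B`. Then
`Φ ∘ X = ∑ₖ Dₖᴴ X Dₖ` is the image of `X` under a completely positive map whose Kraus operators
satisfy `∑ₖ Dₖᴴ Dₖ = ∑ₖ Dₖ Dₖᴴ = diag Φ = 1`, so both the map and its dual are unital and
trace preserving. This gives equality of traces. For the partial sums (Ky Fan): a sum of `ℓ`
eigenvalues of `Φ ∘ X` is `tr (P (Φ ∘ X))` for a spectral projection `P` of rank `ℓ`, and this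
equals `tr (Q X)` where `Q = ∑ₖ Dₖ P Dₖᴴ` satisfies `0 ≤ Q ≤ 1` and `tr Q = ℓ`. In an eigenbasis
of `X`, `tr (Q X)` is a combination of the eigenvalues of `X` with weights in `[0, 1]` summing
to `ℓ`, which is at most the sum of the `ℓ` largest ones.
-/

theorem Antitone.sum_mul_le_sum_filter_lt {n ℓ : ℕ} (hℓ : ℓ < n) {t a : Fin n → ℝ}
    (ha : Antitone a) (ht₀ : ∀ i, 0 ≤ t i) (ht₁ : ∀ i, t i ≤ 1) (ht : ∑ i, t i = ℓ) :
    ∑ i, t i * a i ≤ ∑ i ∈ univ.filter (fun i : Fin n => (i : ℕ) < ℓ), a i := by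
  set m := a ⟨ℓ, hℓ⟩
  set s : Fin n → ℝ := fun i => if (i : ℕ) < ℓ then 1 else 0
  have hs : ∑ i, s i = ℓ := by
    simp [s, Finset.sum_boole, Fin.card_filter_val_lt, hℓ.le]
  -- since `∑ s = ∑ t`, summing these terms gives the difference of the two sides
  have hterm : ∀ i, 0 ≤ (s i - t i) * (a i - m) := fun i => by
    by_cases hi : (i : ℕ) < ℓ
    · have : m ≤ a i := ha (Fin.mk_le_mk.mpr hi.le)
      simp only [s, if_pos hi]
      nlinarith [ht₁ i]
    · have : a i ≤ m := ha (by simpa [Fin.le_def] using hi)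
      simp only [s, if_neg hi]
      nlinarith [ht₀ i]
  have hsum := Finset.sum_nonneg fun i (_ : i ∈ univ) => hterm i
  simp only [sub_mul, mul_sub, Finset.sum_sub_distrib, ← Finset.sum_mul, hs, ht] at hsum
  simpa [s, Finset.sum_filter] using hsum

namespace Matrix

variable {𝕜 ι m n : Type*} [RCLike 𝕜]

theorem PosSemidef.re_diag_le_one [DecidableEq n] {A : Matrix n n 𝕜}
    (hA : (1 - A).PosSemidef) (i : n) : RCLike.re (A i i) ≤ 1 := by
  simpa using (RCLike.nonneg_iff.mp (hA.diag_nonneg (i := i))).1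

section Unitary

variable [Fintype n] [DecidableEq n] (U : unitaryGroup n 𝕜) {A : Matrix n n 𝕜}

theorem trace_conjStarAlgAut (A : Matrix n n 𝕜) :
    (Unitary.conjStarAlgAut 𝕜 _ U A).trace = A.trace := by
  rw [Unitary.conjStarAlgAut_apply, trace_mul_cycle, Unitary.coe_star_mul_self, one_mul]

theorem PosSemidef.conjStarAlgAut (hA : A.PosSemidef) :
    (Unitary.conjStarAlgAut 𝕜 _ U A).PosSemidef := by
  rw [Unitary.conjStarAlgAut_apply, star_eq_conjTranspose]
  exact hA.mul_mul_conjTranspose_same _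

theorem PosSemidef.one_sub_conjStarAlgAut (hA : (1 - A).PosSemidef) :
    (1 - Unitary.conjStarAlgAut 𝕜 _ U A).PosSemidef := by
  simpa only [map_sub, map_one] using hA.conjStarAlgAut U

end Unitary

namespace IsHermitian

variable [Fintype n] [DecidableEq n] {A : Matrix n n 𝕜}

theorem exists_trace_mul_eq_sum_eigenvalues (hA : A.IsHermitian) (S : Finset n) :
    ∃ P : Matrix n n 𝕜, P.PosSemidef ∧ (1 - P).PosSemidef ∧ P.trace = #S ∧
      (P * A).trace = ((∑ j ∈ S, hA.eigenvalues j : ℝ) : 𝕜) := by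
  set E : Matrix n n 𝕜 := diagonal fun j => if j ∈ S then 1 else 0
  have hE : E.PosSemidef := posSemidef_diagonal_iff.mpr fun j => by split_ifs <;> simp
  have hE₁ : (1 - E).PosSemidef := by
    rw [← diagonal_one, diagonal_sub]
    exact posSemidef_diagonal_iff.mpr fun j => by split_ifs <;> simp
  refine ⟨Unitary.conjStarAlgAut 𝕜 _ hA.eigenvectorUnitary E, hE.conjStarAlgAut _,
    hE₁.one_sub_conjStarAlgAut _, ?_, ?_⟩
  · rw [trace_conjStarAlgAut]
    simp [E, trace_diagonal]
  · have hEA : Unitary.conjStarAlgAut 𝕜 _ hA.eigenvectorUnitary E * A =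
        Unitary.conjStarAlgAut 𝕜 _ hA.eigenvectorUnitary
          (E * diagonal (RCLike.ofReal ∘ hA.eigenvalues)) := by
      rw [map_mul, ← hA.spectral_theorem]
    rw [hEA, trace_conjStarAlgAut]
    simp [E, trace_diagonal, Finset.sum_ite_mem]

theorem re_trace_mul_eq_sum_mul_eigenvalues (hA : A.IsHermitian) (Q : Matrix n n 𝕜) :
    RCLike.re (Q * A).trace = ∑ i, RCLike.re
      ((Unitary.conjStarAlgAut 𝕜 _ (star hA.eigenvectorUnitary) Q) i i) * hA.eigenvalues i := by
  rw [← trace_conjStarAlgAut (star hA.eigenvectorUnitary), map_mul,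
    hA.conjStarAlgAut_star_eigenvectorUnitary]
  simp [trace, mul_diagonal]

end IsHermitian

theorem IsHermitian.re_trace_mul_le_sum_filter_lt {N ℓ : ℕ} (hℓ : ℓ < N)
    {A Q : Matrix (Fin N) (Fin N) 𝕜} (hA : A.IsHermitian) (hQ : Q.PosSemidef)
    (hQ₁ : (1 - Q).PosSemidef) (htr : Q.trace = ℓ) {α : Fin N → ℝ} (hα : Antitone α)
    {σ : Equiv.Perm (Fin N)} (hασ : α = hA.eigenvalues ∘ σ) :
    RCLike.re (Q * A).trace ≤ ∑ i ∈ univ.filter (fun i : Fin N => (i : ℕ) < ℓ), α i := by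
  set R := Unitary.conjStarAlgAut 𝕜 _ (star hA.eigenvectorUnitary) Q
  have hR : R.PosSemidef := hQ.conjStarAlgAut _
  have hR₁ : (1 - R).PosSemidef := hQ₁.one_sub_conjStarAlgAut _
  have htrR : ∑ i, RCLike.re (R i i) = ℓ := by
    have : RCLike.re R.trace = ℓ := by rw [trace_conjStarAlgAut, htr, RCLike.natCast_re]
    simpa [trace] using this
  rw [hA.re_trace_mul_eq_sum_mul_eigenvalues, ← Equiv.sum_comp σ]
  subst hασ
  refine hα.sum_mul_le_sum_filter_lt hℓ (t := fun i => RCLike.re (R (σ i) (σ i)))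
    (fun i => (RCLike.nonneg_iff.mp hR.diag_nonneg).1) (fun i => hR₁.re_diag_le_one _) ?_
  rwa [Equiv.sum_comp σ fun i => RCLike.re (R i i)]

section Kraus

variable [Fintype ι] [Fintype m]

def krausMap (K : ι → Matrix m n 𝕜) (A : Matrix m m 𝕜) : Matrix n n 𝕜 :=
  ∑ k, (K k)ᴴ * A * K k

variable (K : ι → Matrix m n 𝕜)

theorem one_sub_krausMap [DecidableEq m] [DecidableEq n] (hK : krausMap K 1 = 1)
    (A : Matrix m m 𝕜) : 1 - krausMap K A = krausMap K (1 - A) := by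
  conv_lhs => rw [← hK]
  simp only [krausMap, Matrix.mul_sub, Matrix.sub_mul, Finset.sum_sub_distrib]

variable [Fintype n]

theorem PosSemidef.krausMap {A : Matrix m m 𝕜} (hA : A.PosSemidef) :
    (krausMap K A).PosSemidef :=
  posSemidef_sum _ fun k _ => hA.conjTranspose_mul_mul_same (K k)

theorem trace_krausMap_mul (A : Matrix m m 𝕜) (B : Matrix n n 𝕜) :
    (krausMap K A * B).trace = (A * krausMap (fun k => (K k)ᴴ) B).trace := by
  simp only [krausMap, Finset.sum_mul, Finset.mul_sum, trace_sum, conjTranspose_conjTranspose]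
  refine Finset.sum_congr rfl fun k _ => ?_
  rw [Matrix.mul_assoc, Matrix.mul_assoc, trace_mul_comm, Matrix.mul_assoc, Matrix.mul_assoc]

theorem trace_krausMap [DecidableEq m] [DecidableEq n] (hK : krausMap (fun k => (K k)ᴴ) 1 = 1)
    (A : Matrix m m 𝕜) : (krausMap K A).trace = A.trace := by
  simpa [hK] using trace_krausMap_mul K A 1

theorem IsHermitian.sum_eigenvalues_le_of_krausMap {N ℓ : ℕ} (hℓ : ℓ < N)
    {K : ι → Matrix (Fin N) (Fin N) 𝕜} (hK : krausMap K 1 = 1)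
    (hK' : krausMap (fun k => (K k)ᴴ) 1 = 1) {A C : Matrix (Fin N) (Fin N) 𝕜}
    (hA : A.IsHermitian) (hC : C.IsHermitian) (hKA : krausMap K A = C)
    {α : Fin N → ℝ} (hα : Antitone α) {σ : Equiv.Perm (Fin N)} (hασ : α = hA.eigenvalues ∘ σ)
    {S : Finset (Fin N)} (hS : #S = ℓ) :
    ∑ j ∈ S, hC.eigenvalues j ≤ ∑ i ∈ univ.filter (fun i : Fin N => (i : ℕ) < ℓ), α i := by
  obtain ⟨P, hP, hP₁, htrP, hPC⟩ := hC.exists_trace_mul_eq_sum_eigenvalues S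
  have hQA : RCLike.re (krausMap (fun k => (K k)ᴴ) P * A).trace = ∑ j ∈ S, hC.eigenvalues j := by
    simp only [trace_krausMap_mul, conjTranspose_conjTranspose, hKA, hPC, RCLike.ofReal_re]
  rw [← hQA]
  refine hA.re_trace_mul_le_sum_filter_lt hℓ (hP.krausMap _) ?_ ?_ hα hασ
  · rw [one_sub_krausMap _ hK']
    exact hP₁.krausMap _
  · rw [trace_krausMap _ (by simpa using hK), htrP, hS]

variable [DecidableEq n]

theorem hadamard_eq_krausMap_diagonal (B : Matrix ι n 𝕜) (A : Matrix n n 𝕜) :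
    (Bᴴ * B) ⊙ A = krausMap (fun k => diagonal (B k)) A := by
  ext i j
  simp only [krausMap, sum_apply, diagonal_conjTranspose, mul_diagonal, diagonal_mul]
  simp only [hadamard_apply, mul_apply, conjTranspose_apply, Pi.star_apply, Finset.sum_mul]
  exact Finset.sum_congr rfl fun k _ => by ring

theorem krausMap_diagonal_one (B : Matrix ι n 𝕜) :
    krausMap (fun k => diagonal (B k)) 1 = diagonal (Bᴴ * B).diag := by
  rw [← hadamard_eq_krausMap_diagonal, hadamard_one]

theorem krausMap_conjTranspose_diagonal_one (B : Matrix ι n 𝕜) :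
    krausMap (fun k => (diagonal (B k))ᴴ) 1 = diagonal (Bᴴ * B).diag := by
  rw [← krausMap_diagonal_one]
  simp [krausMap, diagonal_mul_diagonal, mul_comm]

end Kraus

end Matrix

theorem hermitian_majorizes_hadamard_with_correlation_general {n : ℕ}
    (Φ X : Matrix (Fin n) (Fin n) ℂ)
    (hΦ : Φ.PosSemidef) (hdiag : ∀ i, Φ i i = 1)
    (hX : X.IsHermitian) (hY : (Matrix.hadamard Φ X).IsHermitian)
    (α β : Fin n → ℝ) (hαm : Antitone α)
    (hα : ∃ σ : Equiv.Perm (Fin n), α = hX.eigenvalues ∘ σ)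
    (hβ : ∃ σ : Equiv.Perm (Fin n), β = hY.eigenvalues ∘ σ) :
    (∀ ℓ : ℕ, ℓ < n →
      ∑ i ∈ Finset.univ.filter (fun i : Fin n => (i : ℕ) < ℓ), β i ≤
        ∑ i ∈ Finset.univ.filter (fun i : Fin n => (i : ℕ) < ℓ), α i) ∧
    ∑ i, α i = ∑ i, β i := by
  obtain ⟨B, rfl⟩ : ∃ B : Matrix (Fin n) (Fin n) ℂ, Φ = Bᴴ * B := by
    open scoped MatrixOrder in exact CStarAlgebra.nonneg_iff_eq_star_mul_self.mp hΦ.nonneg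
  have hdiag' : diagonal (Bᴴ * B).diag = 1 := by
    ext i j
    simp [diagonal_apply, one_apply, hdiag]
  have hK : krausMap (fun k => diagonal (B k)) 1 = 1 := by rw [krausMap_diagonal_one, hdiag']
  have hK' : krausMap (fun k => (diagonal (B k))ᴴ) 1 = 1 := by
    rw [krausMap_conjTranspose_diagonal_one, hdiag']
  have hYK := (hadamard_eq_krausMap_diagonal B X).symm
  obtain ⟨σ, rfl⟩ := hα
  obtain ⟨τ, rfl⟩ := hβ
  refine ⟨fun ℓ hℓ => ?_, ?_⟩
  · refine (Finset.sum_map _ τ.toEmbedding _).symm.trans_le ?_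
    exact hX.sum_eigenvalues_le_of_krausMap hℓ hK hK' hY hYK hαm rfl
      (by simp [Fin.card_filter_val_lt, hℓ.le])
  · have htr := trace_krausMap _ hK' X
    rw [hYK, hX.trace_eq_sum_eigenvalues, hY.trace_eq_sum_eigenvalues] at htr
    simp only [Function.comp_apply, Equiv.sum_comp]
    exact_mod_cast htr.symm

/-- If `Phi` is a correlation matrix (PSD with unit diagonal) and `X` is Hermitian, then
`X` majorizes the Schur product `Phi ∘ X`: the decreasingly-ordered eigenvalue sequence of `X`
majorizes that of `Phi ∘ X`. -/
theorem hermitian_majorizes_hadamard_with_correlation {n : ℕ}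
    (Φ X : Matrix (Fin n) (Fin n) ℂ)
    (hΦ : Φ.PosSemidef) (hdiag : ∀ i, Φ i i = 1)
    (hX : X.IsHermitian) (hY : (Matrix.hadamard Φ X).IsHermitian)
    (α β : Fin n → ℝ) (hαm : Antitone α) (hβm : Antitone β)
    (hα : ∃ σ : Equiv.Perm (Fin n), α = hX.eigenvalues ∘ σ)
    (hβ : ∃ σ : Equiv.Perm (Fin n), β = hY.eigenvalues ∘ σ) :
    (∀ ℓ : ℕ, ℓ < n →
      ∑ i ∈ Finset.univ.filter (fun i : Fin n => (i : ℕ) < ℓ), β i ≤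
        ∑ i ∈ Finset.univ.filter (fun i : Fin n => (i : ℕ) < ℓ), α i) ∧
    ∑ i, α i = ∑ i, β i :=
  hermitian_majorizes_hadamard_with_correlation_general Φ X hΦ hdiag hX hY α β hαm hα hβ
end

section
/- In the setting of the previous lemma's proof: if X and Y = Φ ∘ X are Hermitian with spectral decompositions X = Σ_j α_j P_j and Y = Σ_i β_i Q_i into rank-one orthogonal projectors, and Φ is a correlation matrix, then the matrix P with entries p_{ij} = Tr(Q_i (Φ ∘ P_j)) is doubly stochastic and satisfies β_i = Σ_j p_{ij} α_j for all i. -/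
/-!
By the Schur product theorem each `Φ ⊙ P j` is positive semidefinite, so every entry
`Tr (Q i * (Φ ⊙ P j))` is the trace of a product of two positive semidefinite matrices and hence
a non-negative real. Because `Φ ⊙ ·` preserves traces and fixes `1`, the row and column sums
are `Tr (Q i) = 1` and `Tr (Φ ⊙ P j) = Tr (P j) = 1`. Finally `Tr (Q i * Q k)` vanishes for
`k ≠ i`, so `β i = Tr (Q i * (Φ ⊙ X)) = ∑ j, α j * Tr (Q i * (Φ ⊙ P j))`.
-/

open Matrix Finset
open scoped Kronecker Classical ComplexOrder

namespace Matrix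

lemma hadamard_sum {m n κ α : Type*} [NonUnitalNonAssocSemiring α] (A : Matrix m n α)
    (s : Finset κ) (B : κ → Matrix m n α) :
    A ⊙ ∑ k ∈ s, B k = ∑ k ∈ s, A ⊙ B k := by
  ext i j
  simp only [hadamard_apply, sum_apply, Finset.mul_sum]

lemma hadamard_one_of_diag_eq_one {n α : Type*} [DecidableEq n] [MulZeroOneClass α]
    {Φ : Matrix n n α} (hdiag : ∀ i, Φ i i = 1) : Φ ⊙ 1 = 1 := by
  rw [hadamard_one, show Φ.diag = 1 from funext hdiag, Pi.one_def, diagonal_one]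

lemma trace_hadamard_of_diag_eq_one {n α : Type*} [Fintype n] [NonAssocSemiring α]
    {Φ : Matrix n n α} (hdiag : ∀ i, Φ i i = 1) (M : Matrix n n α) :
    (Φ ⊙ M).trace = M.trace := by
  simp only [trace, diag_apply, hadamard_apply, hdiag, one_mul]

section RCLike

variable {ι κ 𝕜 : Type*} [Fintype ι] [RCLike 𝕜]

lemma IsHermitian.posSemidef_of_mul_self_eq {Q : Matrix ι ι 𝕜} (hQ : Q.IsHermitian)
    (hQQ : Q * Q = Q) : Q.PosSemidef := by
  simpa only [hQ.eq, hQQ] using posSemidef_conjTranspose_mul_self Q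

lemma PosSemidef.trace_mul_nonneg {A B : Matrix ι ι 𝕜} (hA : A.PosSemidef)
    (hB : B.PosSemidef) : 0 ≤ (A * B).trace := by
  open scoped MatrixOrder in
  obtain ⟨C, rfl⟩ := CStarAlgebra.nonneg_iff_eq_star_mul_self.mp hA.nonneg
  rw [star_eq_conjTranspose, trace_mul_cycle, trace_mul_comm, ← Matrix.mul_assoc]
  exact (hB.mul_mul_conjTranspose_same C).trace_nonneg

variable [DecidableEq ι] [Fintype κ] [DecidableEq κ] {Q : κ → Matrix ι ι 𝕜}

/-- `∑ l, Tr (Q i * Q l) = Tr (Q i) = Tr (Q i * Q i)`, and every summand is non-negative. -/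
lemma trace_mul_eq_zero_of_sum_eq_one (hQ : ∀ k, (Q k).IsHermitian)
    (hQQ : ∀ k, Q k * Q k = Q k) (hsum : ∑ k, Q k = 1) {i k : κ} (hki : k ≠ i) :
    (Q i * Q k).trace = 0 := by
  have hnonneg : ∀ l, 0 ≤ (Q i * Q l).trace := fun l =>
    ((hQ i).posSemidef_of_mul_self_eq (hQQ i)).trace_mul_nonneg
      ((hQ l).posSemidef_of_mul_self_eq (hQQ l))
  have htotal : ∑ l, (Q i * Q l).trace = (Q i * Q i).trace := by
    rw [← trace_sum, ← Finset.mul_sum, hsum, Matrix.mul_one, hQQ]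
  have hrest : ∑ l ∈ univ.erase i, (Q i * Q l).trace = 0 := by
    have := add_sum_erase univ (fun l => (Q i * Q l).trace) (mem_univ i)
    rwa [htotal, add_eq_left] at this
  exact (sum_eq_zero_iff_of_nonneg fun l _ => hnonneg l).mp hrest k
    (mem_erase.mpr ⟨hki, mem_univ k⟩)

lemma trace_mul_sum_smul_of_sum_eq_one (hQ : ∀ k, (Q k).IsHermitian)
    (hQQ : ∀ k, Q k * Q k = Q k) (hsum : ∑ k, Q k = 1) (c : κ → 𝕜) (i : κ) :
    (Q i * ∑ k, c k • Q k).trace = c i * (Q i).trace := by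
  rw [Finset.mul_sum, trace_sum, sum_eq_single i]
  · rw [Matrix.mul_smul, trace_smul, hQQ, smul_eq_mul]
  · intro k _ hki
    rw [Matrix.mul_smul, trace_smul, trace_mul_eq_zero_of_sum_eq_one hQ hQQ hsum hki, smul_zero]
  · exact fun hi => absurd (mem_univ i) hi

end RCLike

end Matrix

/-- In the setting of the majorization lemma: for spectral decompositions
`X = ∑ j, α j • P j` and `Phi ∘ X = ∑ i, β i • Q i` into rank-one orthogonal projectors,
the matrix with entries `p i j = Tr (Q i * (Phi ∘ P j))` is doubly stochastic (entries are
non-negative reals, all row and column sums are 1) and `β i = ∑ j, p i j * α j`. -/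
theorem doubly_stochastic_spectral_transfer {n : ℕ}
    (Φ X : Matrix (Fin n) (Fin n) ℂ)
    (hΦ : Φ.PosSemidef) (hdiag : ∀ i, Φ i i = 1)
    (α β : Fin n → ℝ) (P Q : Fin n → Matrix (Fin n) (Fin n) ℂ)
    (hP : ∀ j, (P j).IsHermitian ∧ P j * P j = P j ∧ (P j).trace = 1)
    (hQ : ∀ i, (Q i).IsHermitian ∧ Q i * Q i = Q i ∧ (Q i).trace = 1)
    (hPsum : ∑ j, P j = 1) (hQsum : ∑ i, Q i = 1)
    (hXdec : X = ∑ j, (α j : ℂ) • P j)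
    (hYdec : Matrix.hadamard Φ X = ∑ i, (β i : ℂ) • Q i) :
    (∀ i j, ∃ p : ℝ, 0 ≤ p ∧ (Q i * Matrix.hadamard Φ (P j)).trace = (p : ℂ)) ∧
    (∀ i, ∑ j, (Q i * Matrix.hadamard Φ (P j)).trace = 1) ∧
    (∀ j, ∑ i, (Q i * Matrix.hadamard Φ (P j)).trace = 1) ∧
    (∀ i, (β i : ℂ) = ∑ j, (Q i * Matrix.hadamard Φ (P j)).trace * (α j : ℂ)) := by
  have hQpsd i : (Q i).PosSemidef := (hQ i).1.posSemidef_of_mul_self_eq (hQ i).2.1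
  have hΦPpsd j : (Φ ⊙ P j).PosSemidef :=
    hΦ.hadamard ((hP j).1.posSemidef_of_mul_self_eq (hP j).2.1)
  have hΦPsum : ∑ j, Φ ⊙ P j = 1 := by
    rw [← hadamard_sum, hPsum, hadamard_one_of_diag_eq_one hdiag]
  refine ⟨fun i j => ?_, fun i => ?_, fun j => ?_, fun i => ?_⟩
  · obtain ⟨p, hp, hpt⟩ :=
      RCLike.nonneg_iff_exists_ofReal.mp ((hQpsd i).trace_mul_nonneg (hΦPpsd j))
    exact ⟨p, hp, hpt.symm⟩
  · rw [← trace_sum, ← Finset.mul_sum, hΦPsum, Matrix.mul_one, (hQ i).2.2]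
  · rw [← trace_sum, ← Finset.sum_mul, hQsum, Matrix.one_mul,
      trace_hadamard_of_diag_eq_one hdiag, (hP j).2.2]
  · have hΦX : Φ ⊙ X = ∑ j, (α j : ℂ) • (Φ ⊙ P j) := by
      simp only [hXdec, hadamard_sum, hadamard_smul]
    calc (β i : ℂ)
        = (Q i * (Φ ⊙ X)).trace := by
          rw [hYdec, trace_mul_sum_smul_of_sum_eq_one (fun k => (hQ k).1) (fun k => (hQ k).2.1)
            hQsum, (hQ i).2.2, mul_one]
      _ = ∑ j, (Q i * (Φ ⊙ P j)).trace * (α j : ℂ) := by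
          simp only [hΦX, Finset.mul_sum, trace_sum, Matrix.mul_smul, trace_smul, smul_eq_mul,
            mul_comm]
end

section
/- Let A ∈ ℝ^{n×n} be symmetric, non-negative, and irreducible, D a diagonal matrix with non-negative entries, k > 1 a real number, and suppose there exists a real correlation matrix Φ with Φ ∘ (D − A) ≥ D + (1/(k−1))A entrywise. Then λ_max(D − A) ≥ λ_max(D + (1/(k−1))A). -/
open Matrix Finset
open scoped Kronecker Classical

/-- A matrix is irreducible if every nonempty proper subset of indices has an edge leaving it. -/
def Matrix.IsIrreducible' {n : ℕ} (M : Matrix (Fin n) (Fin n) ℝ) : Prop :=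
  ∀ S : Finset (Fin n), S.Nonempty → S ≠ Finset.univ → ∃ i ∈ S, ∃ j ∉ S, M i j ≠ 0

/-!
Write `M = D + A/(k-1)` and `N = D - A`. In the Loewner order `N ≤ λ_max(N) • 1`, and since `Φ`
has unit diagonal the Schur product theorem turns this into `Φ ∘ N ≤ λ_max(N) • 1`. The
off-diagonal entries of `M` are non-negative, so `xᵀ M x ≤ |x|ᵀ M |x|`, and the entrywise bound
`M ≤ Φ ∘ N` on the non-negative vector `|x|` then gives
`xᵀ M x ≤ |x|ᵀ (Φ ∘ N) |x| ≤ λ_max(N) ‖x‖²` for every `x`, i.e. `λ_max(M) ≤ λ_max(N)`.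
Passing from `x` to `|x|` takes the place of the Perron–Frobenius eigenvector.
-/

-- `≤` between matrices is the Loewner order, not the entrywise one.
open scoped MatrixOrder ComplexOrder

namespace Matrix

theorem hadamard_sub {m n α : Type*} [NonUnitalNonAssocRing α] (A B C : Matrix m n α) :
    A ⊙ (B - C) = A ⊙ B - A ⊙ C :=
  ext fun _ _ => mul_sub _ _ _

variable {ι : Type*} [Fintype ι]

theorem PosSemidef.hadamard_le_algebraMap [DecidableEq ι] {𝕜 : Type*} [RCLike 𝕜]
    {Φ N : Matrix ι ι 𝕜} {r : ℝ} (hΦ : Φ.PosSemidef) (hΦdiag : Φ.diag = 1)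
    (hN : N ≤ algebraMap ℝ _ r) :
    Φ ⊙ N ≤ algebraMap ℝ _ r := by
  have h := hΦ.hadamard (le_iff.mp hN)
  rwa [hadamard_sub, algebraMap_eq_diagonal, hadamard_diagonal, hΦdiag, one_mul] at h

theorem le_algebraMap_iff_dotProduct_mulVec_le [DecidableEq ι] {M : Matrix ι ι ℝ}
    (hM : M.IsHermitian) {r : ℝ} :
    M ≤ algebraMap ℝ _ r ↔ ∀ x, x ⬝ᵥ M *ᵥ x ≤ r * (x ⬝ᵥ x) := by
  have hquad (x : ι → ℝ) :
      x ⬝ᵥ (algebraMap ℝ _ r - M) *ᵥ x = r * (x ⬝ᵥ x) - x ⬝ᵥ M *ᵥ x := by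
    rw [sub_mulVec, dotProduct_sub, Algebra.algebraMap_eq_smul_one, smul_mulVec, one_mulVec,
      dotProduct_smul, smul_eq_mul]
  have hH : (algebraMap ℝ (Matrix ι ι ℝ) r - M).IsHermitian :=
    (isHermitian_diagonal _).sub hM
  simp only [le_iff, posSemidef_iff_dotProduct_mulVec, star_trivial, hquad, sub_nonneg, hH,
    true_and]

theorem dotProduct_mulVec_le_abs {M : Matrix ι ι ℝ} (hM : ∀ i j, i ≠ j → 0 ≤ M i j)
    (x : ι → ℝ) : x ⬝ᵥ M *ᵥ x ≤ |x| ⬝ᵥ M *ᵥ |x| := by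
  simp only [dotProduct, mulVec, Finset.mul_sum, Pi.abs_apply]
  refine sum_le_sum fun i _ => sum_le_sum fun j _ => ?_
  obtain rfl | hij := eq_or_ne i j
  · rw [mul_left_comm, mul_left_comm |x i|, abs_mul_abs_self]
  · calc x i * (M i j * x j) ≤ |x i * (M i j * x j)| := le_abs_self _
      _ = |x i| * (M i j * |x j|) := by rw [abs_mul, abs_mul, abs_of_nonneg (hM i j hij)]

theorem dotProduct_mulVec_mono {M P : Matrix ι ι ℝ} (h : ∀ i j, M i j ≤ P i j) {x : ι → ℝ}
    (hx : 0 ≤ x) : x ⬝ᵥ M *ᵥ x ≤ x ⬝ᵥ P *ᵥ x := by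
  simp only [dotProduct, mulVec, Finset.mul_sum]
  refine sum_le_sum fun i _ => sum_le_sum fun j _ => ?_
  gcongr
  exacts [hx i, hx j, h i j]

end Matrix

theorem lamMax_fin_zero (M : Matrix (Fin 0) (Fin 0) ℝ) : lamMax M = 0 := by
  rw [lamMax, spectrum.of_subsingleton, Real.sSup_empty]

section

variable {n : ℕ}

theorem Matrix.IsHermitian.le_algebraMap_lamMax {M : Matrix (Fin n) (Fin n) ℝ}
    (hM : M.IsHermitian) : M ≤ algebraMap ℝ _ (lamMax M) :=
  le_algebraMap_of_spectrum_le (fun _ hx => le_csSup M.finite_real_spectrum.bddAbove hx)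
    hM.isSelfAdjoint

theorem Matrix.IsHermitian.lamMax_le_iff [NeZero n] {M : Matrix (Fin n) (Fin n) ℝ}
    (hM : M.IsHermitian) {r : ℝ} : lamMax M ≤ r ↔ M ≤ algebraMap ℝ _ r := by
  have hne : (spectrum ℝ M).Nonempty := by
    rw [hM.spectrum_real_eq_range_eigenvalues]; exact Set.range_nonempty _
  rw [lamMax, csSup_le_iff M.finite_real_spectrum.bddAbove hne,
    le_algebraMap_iff_spectrum_le hM.isSelfAdjoint]

end

theorem lamMax_sub_ge_of_correlation_general {n : ℕ} (A : Matrix (Fin n) (Fin n) ℝ)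
    (d : Fin n → ℝ) (k : ℝ)
    (hAsymm : A.IsSymm) (hA0 : ∀ i j, 0 ≤ A i j)
    (hk : 1 < k)
    (Φ : Matrix (Fin n) (Fin n) ℝ) (hΦ : Φ.PosSemidef) (hΦdiag : ∀ i, Φ i i = 1)
    (hineq : ∀ i j,
      (Matrix.diagonal d + (1 / (k - 1)) • A) i j ≤
        Matrix.hadamard Φ (Matrix.diagonal d - A) i j) :
    lamMax (Matrix.diagonal d + (1 / (k - 1)) • A) ≤ lamMax (Matrix.diagonal d - A) := by
  obtain rfl | hn := eq_zero_or_neZero n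
  · rw [lamMax_fin_zero, lamMax_fin_zero]
  set M := diagonal d + (1 / (k - 1)) • A
  set N := diagonal d - A
  have hA : A.IsHermitian := isHermitian_iff_isSymm.mpr hAsymm
  have hM : M.IsHermitian := (isHermitian_diagonal d).add (hA.smul (IsSelfAdjoint.all _))
  have hN : N.IsHermitian := (isHermitian_diagonal d).sub hA
  have hM_offDiag (i j : Fin n) (hij : i ≠ j) : 0 ≤ M i j := by
    have : 0 < k - 1 := sub_pos.mpr hk
    simp only [M, Matrix.add_apply, diagonal_apply_ne _ hij, Matrix.smul_apply, smul_eq_mul,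
      zero_add]
    exact mul_nonneg (by positivity) (hA0 i j)
  have hΦN : Φ ⊙ N ≤ algebraMap ℝ _ (lamMax N) :=
    hΦ.hadamard_le_algebraMap (funext hΦdiag) hN.le_algebraMap_lamMax
  rw [hM.lamMax_le_iff, le_algebraMap_iff_dotProduct_mulVec_le hM]
  intro x
  calc x ⬝ᵥ M *ᵥ x ≤ |x| ⬝ᵥ M *ᵥ |x| := dotProduct_mulVec_le_abs hM_offDiag x
    _ ≤ |x| ⬝ᵥ (Φ ⊙ N) *ᵥ |x| := dotProduct_mulVec_mono hineq (abs_nonneg x)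
    _ ≤ lamMax N * (|x| ⬝ᵥ |x|) :=
      (le_algebraMap_iff_dotProduct_mulVec_le (hΦ.isHermitian.hadamard hN)).mp hΦN |x|
    _ = lamMax N * (x ⬝ᵥ x) := by simp only [dotProduct, Pi.abs_apply, abs_mul_abs_self]

/-- If `A` is symmetric, non-negative and irreducible, `D = diagonal d` with `d ≥ 0`,
`k > 1`, and some real correlation matrix `Phi` satisfies
`Phi ∘ (D - A) ≥ D + (1/(k-1)) A` entrywise, then
`lamMax (D - A) ≥ lamMax (D + (1/(k-1)) A)`. -/
theorem lamMax_sub_ge_of_correlation {n : ℕ} (A : Matrix (Fin n) (Fin n) ℝ)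
    (d : Fin n → ℝ) (k : ℝ)
    (hAsymm : A.IsSymm) (hA0 : ∀ i j, 0 ≤ A i j) (hirr : A.IsIrreducible')
    (hd : ∀ i, 0 ≤ d i) (hk : 1 < k)
    (Φ : Matrix (Fin n) (Fin n) ℝ) (hΦ : Φ.PosSemidef) (hΦdiag : ∀ i, Φ i i = 1)
    (hineq : ∀ i j,
      (Matrix.diagonal d + (1 / (k - 1)) • A) i j ≤
        Matrix.hadamard Φ (Matrix.diagonal d - A) i j) :
    lamMax (Matrix.diagonal d + (1 / (k - 1)) • A) ≤ lamMax (Matrix.diagonal d - A) :=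
  lamMax_sub_ge_of_correlation_general A d k hAsymm hA0 hk Φ hΦ hΦdiag hineq
end

section
/- For every graph G with at least one edge, the clique number is at most the vector chromatic number: ω(G) ≤ χ_v(G). -/
open Matrix Finset
open scoped Kronecker Classical

/-!
Unit vectors `u₁, …, u_ω` with pairwise inner products at most `-c` satisfy
`0 ≤ ‖∑ uᵢ‖² ≤ ω (1 - (ω - 1) c)`, so `ω ≤ 1 + 1/c`; for a clique in a vector colouring
with parameter `k` this gives `ω ≤ k`. The infimum defining `vecChromNum` is over a nonempty
set, since the vertices of a regular simplex centred at the origin, one per vertex of the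
graph, form a vector colouring with `k = n`.
-/

section UnitVectors

variable {E ι : Type*} [NormedAddCommGroup E] [InnerProductSpace ℝ E]

theorem norm_sum_sq_le_of_inner_le {u : ι → E} {s : Finset ι} {c : ℝ}
    (hu : ∀ i ∈ s, ‖u i‖ = 1) (hc : ∀ i ∈ s, ∀ j ∈ s, i ≠ j → inner ℝ (u i) (u j) ≤ -c) :
    ‖∑ i ∈ s, u i‖ ^ 2 ≤ #s * (1 - (#s - 1) * c) := by
  have row_le : ∀ i ∈ s, ∑ j ∈ s, inner ℝ (u i) (u j) ≤ 1 - (#s - 1) * c := by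
    intro i hi
    have diag : inner ℝ (u i) (u i) = 1 := by
      rw [real_inner_self_eq_norm_sq, hu i hi, one_pow]
    have off_diag : ∑ j ∈ s.erase i, inner ℝ (u i) (u j) ≤ #(s.erase i) • -c :=
      Finset.sum_le_card_nsmul _ _ _ fun j hj =>
        hc i hi j (Finset.mem_of_mem_erase hj) (Finset.ne_of_mem_erase hj).symm
    rw [Finset.card_erase_of_mem hi, nsmul_eq_mul,
      Nat.cast_sub (Finset.card_pos.mpr ⟨i, hi⟩), Nat.cast_one] at off_diag
    rw [← Finset.add_sum_erase s _ hi, diag]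
    linarith
  calc ‖∑ i ∈ s, u i‖ ^ 2 = ∑ i ∈ s, ∑ j ∈ s, inner ℝ (u i) (u j) := by
        rw [← real_inner_self_eq_norm_sq, sum_inner]
        simp only [inner_sum]
    _ ≤ #s • (1 - (#s - 1) * c) := Finset.sum_le_card_nsmul _ _ _ row_le
    _ = #s * (1 - (#s - 1) * c) := nsmul_eq_mul _ _

theorem card_le_of_inner_le_neg_inv {u : ι → E} {s : Finset ι} {k : ℝ} (hk : 1 < k)
    (hu : ∀ i ∈ s, ‖u i‖ = 1)
    (hc : ∀ i ∈ s, ∀ j ∈ s, i ≠ j → inner ℝ (u i) (u j) ≤ -(1 / (k - 1))) :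
    (#s : ℝ) ≤ k := by
  obtain hs | hs := s.eq_empty_or_nonempty
  · simp only [hs, Finset.card_empty, Nat.cast_zero]
    linarith
  have hk₁ : 0 < k - 1 := sub_pos.mpr hk
  have hpos : (0 : ℝ) < #s := by exact_mod_cast hs.card_pos
  have bound := (sq_nonneg _).trans (norm_sum_sq_le_of_inner_le hu hc)
  have hratio : (#s - 1) * (1 / (k - 1)) ≤ 1 := by
    linarith [nonneg_of_mul_nonneg_right bound hpos]
  rw [mul_one_div, div_le_one hk₁] at hratio
  linarith

end UnitVectors

section Simplex

variable {V : Type*} [Fintype V]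

noncomputable def centeredBasisVec (i : V) : EuclideanSpace ℝ V :=
  WithLp.toLp 2 fun l => (if l = i then 1 else 0) - (Fintype.card V : ℝ)⁻¹

theorem inner_centeredBasisVec [Nonempty V] (i j : V) :
    inner ℝ (centeredBasisVec i) (centeredBasisVec j) =
      (if i = j then 1 else 0) - (Fintype.card V : ℝ)⁻¹ := by
  have hV : (Fintype.card V : ℝ) ≠ 0 := by positivity
  simp only [centeredBasisVec, PiLp.inner_apply, RCLike.inner_apply, conj_trivial, sub_mul,
    mul_sub, ite_mul, mul_ite, one_mul, mul_one, zero_mul, mul_zero, Finset.sum_sub_distrib,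
    Finset.sum_ite_eq', Finset.mem_univ, if_true, Finset.sum_const, Finset.card_univ,
    nsmul_eq_mul]
  split_ifs <;> field_simp <;> ring

theorem exists_unit_vectors_inner_eq (hV : 2 ≤ Fintype.card V) :
    ∃ u : V → EuclideanSpace ℝ V, (∀ i, ‖u i‖ = 1) ∧
      ∀ i j, i ≠ j → inner ℝ (u i) (u j) = -(1 / (Fintype.card V - 1)) := by
  have : Nonempty V := Fintype.card_pos_iff.mp (by omega)
  set m : ℝ := (Fintype.card V : ℝ)
  have hm : 1 < m := Nat.one_lt_cast.mpr hV
  let u i : EuclideanSpace ℝ V := √(m / (m - 1)) • centeredBasisVec i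
  have inner_u : ∀ i j, inner ℝ (u i) (u j) = m / (m - 1) * ((if i = j then 1 else 0) - m⁻¹) := by
    intro i j
    have : √(m / (m - 1)) * √(m / (m - 1)) = m / (m - 1) :=
      Real.mul_self_sqrt (div_nonneg (by linarith) (by linarith))
    rw [real_inner_smul_left, real_inner_smul_right, inner_centeredBasisVec, ← mul_assoc, this]
  have hm₁ : m - 1 ≠ 0 := by linarith
  refine ⟨u, fun i => ?_, fun i j hij => ?_⟩
  · rw [norm_eq_sqrt_real_inner, inner_u, if_pos rfl, Real.sqrt_eq_one]
    field_simp
  · rw [inner_u, if_neg hij]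
    field_simp
    ring

end Simplex

/-- The clique number is at most the vector chromatic number. -/
theorem cliqueNum_le_vecChromNum {n : ℕ} (G : SimpleGraph (Fin n))
    (he : G.edgeFinset.Nonempty) :
    (G.cliqueNum : ℝ) ≤ vecChromNum G := by
  obtain ⟨a, b, hab⟩ := G.ne_bot_iff_exists_adj.mp (SimpleGraph.edgeFinset_nonempty.mp he)
  have hn : 2 ≤ n := by
    simpa [Nat.lt_iff_add_one_le] using
      Fintype.one_lt_card_iff_nontrivial.mpr (nontrivial_of_ne a b hab.ne)
  obtain ⟨u₀, hu₀, hu₀_inner⟩ := exists_unit_vectors_inner_eq (V := Fin n) (by simpa using hn)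
  refine le_csInf ⟨n, by exact_mod_cast hn, u₀, hu₀, fun i j hij => ?_⟩ ?_
  · simpa using (hu₀_inner i j hij.ne).le
  rintro k ⟨hk, u, hu, hu_adj⟩
  obtain ⟨s, hs⟩ := G.exists_isNClique_cliqueNum
  rw [← hs.card_eq]
  exact card_le_of_inner_le_neg_inv (by linarith) (fun i _ => hu i)
    fun i hi j hj hij => hu_adj i j (hs.isClique hi hj hij)
end
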